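/- If a convex polygon in the triangular grid has outer boundary length x, then it is contained in a regular hexagon of side length y ≤ x circumscribing it, whose outer boundary length is 6y; consequently, during convexification no boundary particle needs to move through more than 6x nodes. -/

import Mathlib

/-- Adjacency of the triangular grid on ℤ² (lattice coordinates). -/
def triAdj (p q : ℤ × ℤ) : Prop :=
  q - p ∈ ({(1, 0), (0, 1), (-1, 1), (-1, 0), (0, -1), (1, -1)} : Set (ℤ × ℤ))

/-- `p` and `q` are connected by a grid path staying inside `A`. -/
def connIn (A : Set (ℤ × ℤ)) (p q : ℤ × ℤ) : Prop :=
  Relation.ReflTransGen (fun a b => triAdj a b ∧ a ∈ A ∧ b ∈ A) p q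

/-- The connected component of `p` inside `A`. -/
def compIn (A : Set (ℤ × ℤ)) (p : ℤ × ℤ) : Set (ℤ × ℤ) := {q | connIn A p q}

/-- The outer boundary of a shape `S`: the occupied nodes adjacent to the
infinite component of the complement. -/
def outerBd (S : Set (ℤ × ℤ)) : Set (ℤ × ℤ) :=
  {p ∈ S | ∃ q, triAdj p q ∧ q ∉ S ∧ (compIn Sᶜ q).Infinite}

/-- Embedding of the lattice coordinates of the triangular grid into the plane. -/
noncomputable def latticeEmbed (p : ℤ × ℤ) : ℝ × ℝ :=
  ((p.1 : ℝ) + (p.2 : ℝ) / 2, (p.2 : ℝ) * Real.sqrt 3 / 2)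

lemma triAdj_add {d : ℤ × ℤ} (hd : triAdj 0 d) (p : ℤ × ℤ) : triAdj p (p + d) := by
  simp only [triAdj, sub_zero] at hd
  simpa [triAdj] using hd

lemma triAdj_bounds {a b : ℤ × ℤ} (h : triAdj a b) :
    b.1 ≤ a.1 + 1 ∧ a.1 ≤ b.1 + 1 ∧ b.2 ≤ a.2 + 1 ∧ a.2 ≤ b.2 + 1 ∧
      b.1 + b.2 ≤ a.1 + a.2 + 1 ∧ a.1 + a.2 ≤ b.1 + b.2 + 1 := by
  simp only [triAdj, Set.mem_insert_iff, Set.mem_singleton_iff, Prod.ext_iff,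
    Prod.fst_sub, Prod.snd_sub] at h
  rcases h with h|h|h|h|h|h <;> omega

/-- If `f` is constant along the grid direction `d` and `g` strictly increases along
`d`, then any value attained by `f` on `S` is attained on the outer boundary of `S`:
take a `g`-maximal point in the fiber; the ray in direction `d` from it escapes to
infinity inside the complement. -/
lemma exists_boundary (S : Finset (ℤ × ℤ)) (f g : ℤ × ℤ → ℤ) (d : ℤ × ℤ)
    (hd : triAdj 0 d) (hf : ∀ p, f (p + d) = f p) (hg : ∀ p, g (p + d) = g p + 1)
    {t : ℤ} (ht : ∃ p ∈ S, f p = t) :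
    ∃ p ∈ outerBd ↑S, f p = t := by
  classical
  obtain ⟨p0, hp0S, hp0f⟩ := ht
  have hTne : (S.filter fun p => f p = t).Nonempty := ⟨p0, by simp [hp0S, hp0f]⟩
  obtain ⟨p, hpT, hmax⟩ := (S.filter fun p => f p = t).exists_max_image g hTne
  have hpS : p ∈ S := (Finset.mem_filter.mp hpT).1
  have hpf : f p = t := (Finset.mem_filter.mp hpT).2
  have key : ∀ k : ℕ, f (p + (k + 1) • d) = f p ∧ g (p + (k + 1) • d) = g p + (k + 1) := by
    intro k
    induction k with
    | zero => constructor <;> simp [hf, hg]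
    | succ k ih =>
      have h : p + (k + 1 + 1) • d = (p + (k + 1) • d) + d := by
        rw [succ_nsmul, ← add_assoc]
      rw [h, hf, hg]
      refine ⟨ih.1, ?_⟩
      rw [ih.2]; push_cast; ring
  have hnot : ∀ k : ℕ, p + (k + 1) • d ∉ S := by
    intro k hk
    have hmem : p + (k + 1) • d ∈ S.filter fun p => f p = t :=
      Finset.mem_filter.mpr ⟨hk, by rw [(key k).1, hpf]⟩
    have h1 := hmax _ hmem
    have h2 := (key k).2
    omega
  have hray : ∀ k : ℕ, connIn (↑S)ᶜ (p + d) (p + (k + 1) • d) := by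
    intro k
    induction k with
    | zero => simp only [zero_add, one_smul]; exact Relation.ReflTransGen.refl
    | succ k ih =>
      refine ih.tail ⟨?_, ?_, ?_⟩
      · have h : p + (k + 1 + 1) • d = (p + (k + 1) • d) + d := by
          rw [succ_nsmul, ← add_assoc]
        rw [h]; exact triAdj_add hd _
      · simpa using hnot k
      · simpa using hnot (k + 1)
  have hinf : (compIn (↑S)ᶜ (p + d)).Infinite := by
    apply Set.infinite_of_injective_forall_mem (f := fun k : ℕ => p + (k + 1) • d)
    · intro k1 k2 he
      simp only at he
      have h1 := (key k1).2
      have h2 := (key k2).2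
      rw [he] at h1
      omega
    · intro k; exact hray k
  refine ⟨p, ⟨by simpa using hpS, p + d, triAdj_add hd p, by simpa using hnot 0, hinf⟩, hpf⟩

/-- Discrete intermediate value theorem along a grid path. -/
lemma ivt (S : Finset (ℤ × ℤ)) (f : ℤ × ℤ → ℤ)
    (hstep : ∀ a b : ℤ × ℤ, triAdj a b → f b ≤ f a + 1)
    {p q : ℤ × ℤ} (hpq : connIn ↑S p q) (hp : p ∈ S) {t : ℤ}
    (h1 : f p ≤ t) (h2 : t ≤ f q) : ∃ r ∈ S, f r = t := by
  have hpq' : Relation.ReflTransGen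
      (fun a b => triAdj a b ∧ a ∈ (↑S : Set (ℤ × ℤ)) ∧ b ∈ (↑S : Set (ℤ × ℤ))) p q := hpq
  induction hpq' with
  | refl => exact ⟨p, hp, by omega⟩
  | @tail b c hb hbc ih =>
    by_cases h : t ≤ f b
    · exact ih hb h
    · have hs := hstep b c hbc.1
      have hc : c ∈ S := by simpa using hbc.2.2
      exact ⟨c, hc, by omega⟩

/-- The width of a connected shape in the direction measured by `f` is bounded by
the number of outer boundary nodes. -/
lemma width_le (S : Finset (ℤ × ℤ)) (hne : S.Nonempty)
    (hconn : ∀ p ∈ S, ∀ q ∈ S, connIn (↑S) p q)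
    (f g : ℤ × ℤ → ℤ) (d : ℤ × ℤ) (hd : triAdj 0 d)
    (hf : ∀ p, f (p + d) = f p) (hg : ∀ p, g (p + d) = g p + 1)
    (hstep : ∀ a b : ℤ × ℤ, triAdj a b → f b ≤ f a + 1) :
    S.sup' hne f + 1 - S.inf' hne f ≤ ((outerBd ↑S).ncard : ℤ) := by
  classical
  set a := S.inf' hne f with ha
  set b := S.sup' hne f with hb
  obtain ⟨pa, hpaS, hpa⟩ := S.exists_mem_eq_inf' hne f
  obtain ⟨pb, hpbS, hpb⟩ := S.exists_mem_eq_sup' hne f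
  have hab : a ≤ b := by rw [ha, hb, hpb]; exact Finset.inf'_le f hpbS
  have hmem : ∀ t : ℤ, ∃ p : ℤ × ℤ, t ∈ Set.Icc a b → p ∈ outerBd ↑S ∧ f p = t := by
    intro t
    by_cases ht : t ∈ Set.Icc a b
    · obtain ⟨r, hrS, hrf⟩ := ivt S f hstep (hconn pa hpaS pb hpbS) hpaS (t := t)
        (by rw [← hpa, ← ha]; exact ht.1) (by rw [← hpb, ← hb]; exact ht.2)
      obtain ⟨p, hpB, hpf⟩ := exists_boundary S f g d hd hf hg ⟨r, hrS, hrf⟩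
      exact ⟨p, fun _ => ⟨hpB, hpf⟩⟩
    · exact ⟨0, fun h => absurd h ht⟩
  choose φ hφ using hmem
  have hfin : (outerBd ↑S).Finite := S.finite_toSet.subset fun x hx => hx.1
  have hcard : (Set.Icc a b).ncard ≤ (outerBd ↑S).ncard := by
    refine Set.ncard_le_ncard_of_injOn φ (fun t ht => (hφ t ht).1) ?_ hfin
    intro t1 h1 t2 h2 he
    rw [← (hφ t1 h1).2, he, (hφ t2 h2).2]
  have hicc : (Set.Icc a b).ncard = (b + 1 - a).toNat := by
    rw [← Finset.coe_Icc, Set.ncard_coe_finset, Int.card_Icc]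
  omega

/-- every convex lattice polygon of the triangular grid (a finite
connected shape that is the set of lattice points of a convex plane region) whose
outer boundary has `x` nodes is contained in a grid-aligned regular hexagon of
side length `y ≤ x` (the hexagonal ball `max(|·₁ − c₁|, |·₂ − c₂|, |·₁+·₂ − c₁ − c₂|) ≤ y`);
hence during convexification no boundary particle needs to move more than `6x` nodes. -/
theorem convex_polygon_in_hexagon
    (S : Finset (ℤ × ℤ)) (hne : S.Nonempty)
    (hconn : ∀ p ∈ S, ∀ q ∈ S, connIn (↑S) p q)
    (hconv : ∃ K : Set (ℝ × ℝ), Convex ℝ K ∧ ∀ p : ℤ × ℤ, p ∈ S ↔ latticeEmbed p ∈ K) :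
    ∃ (c : ℤ × ℤ) (y : ℕ), y ≤ (outerBd ↑S).ncard ∧
      ∀ p ∈ S, |p.1 - c.1| ≤ (y : ℤ) ∧ |p.2 - c.2| ≤ (y : ℤ) ∧
        |p.1 + p.2 - (c.1 + c.2)| ≤ (y : ℤ) := by
  classical
  have W1 := width_le S hne hconn (fun p => p.1) (fun p => p.2) (0, 1)
    (by simp [triAdj]) (fun p => by simp) (fun p => by simp)
    (fun a b h => (triAdj_bounds h).1)
  have W2 := width_le S hne hconn (fun p => p.2) (fun p => p.1) (1, 0)
    (by simp [triAdj]) (fun p => by simp) (fun p => by simp)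
    (fun a b h => (triAdj_bounds h).2.2.1)
  have W3 := width_le S hne hconn (fun p => p.1 + p.2) (fun p => p.1) (1, -1)
    (by simp [triAdj]) (fun p => by simp; ring) (fun p => by simp)
    (fun a b h => (triAdj_bounds h).2.2.2.2.1)
  set y := (outerBd (↑S : Set (ℤ × ℤ))).ncard with hy
  set a1 := S.inf' hne (fun p => p.1) with ha1
  set b1 := S.sup' hne (fun p => p.1) with hb1
  set a2 := S.inf' hne (fun p => p.2) with ha2
  set b2 := S.sup' hne (fun p => p.2) with hb2
  set a3 := S.inf' hne (fun p => p.1 + p.2) with ha3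
  set b3 := S.sup' hne (fun p => p.1 + p.2) with hb3
  obtain ⟨q3, hq3S, hq3⟩ := S.exists_mem_eq_sup' hne (fun p => p.1 + p.2)
  have hb3le : b3 ≤ b1 + b2 := by
    rw [hb3, hq3, hb1, hb2]
    exact add_le_add (Finset.le_sup' (fun p => p.1) hq3S) (Finset.le_sup' (fun p => p.2) hq3S)
  refine ⟨(max (b1 - (y : ℤ)) (b3 - b2), b2 - (y : ℤ)), y, le_refl _, ?_⟩
  intro p hp
  have h1 : a1 ≤ p.1 := Finset.inf'_le (fun p => p.1) hp
  have h2 : p.1 ≤ b1 := Finset.le_sup' (fun p => p.1) hp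
  have h3 : a2 ≤ p.2 := Finset.inf'_le (fun p => p.2) hp
  have h4 : p.2 ≤ b2 := Finset.le_sup' (fun p => p.2) hp
  have h5 : a3 ≤ p.1 + p.2 := Finset.inf'_le (fun p => p.1 + p.2) hp
  have h6 : p.1 + p.2 ≤ b3 := Finset.le_sup' (fun p => p.1 + p.2) hp
  simp only [abs_le]
  refine ⟨⟨?_, ?_⟩, ⟨?_, ?_⟩, ?_, ?_⟩ <;> omega
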